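/- Let I = ⟨x^c, x^u y^v, y^d⟩ ⊂ K[x,y] where x^u y^v lies in the integral closure of ⟨x^c, y^d⟩ (i.e., u/c + v/d ≥ 1, with 0 < u < c, 0 < v < d). Then every power of I is Ratliff-Rush: for all l ≥ 1, I^l = ∪_{m≥1}((I^l)^{m+1} : (I^l)^m). -/

import Mathlib

open MvPolynomial

namespace RRAux

/-- Exponent vectors of the monomial generators of `I^n`. -/
def expSet (c d u v n : ℕ) : Set (Fin 2 →₀ ℕ) :=
  {s | ∃ a b e : ℕ, a + b + e = n ∧
    s = Finsupp.single 0 (c * a + u * b) + Finsupp.single 1 (v * b + d * e)}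

lemma single_le_iff {A B : ℕ} {s : Fin 2 →₀ ℕ} :
    Finsupp.single 0 A + Finsupp.single 1 B ≤ s ↔ A ≤ s 0 ∧ B ≤ s 1 := by
  rw [Finsupp.le_def, Fin.forall_fin_two]
  simp [Finsupp.single_apply]

lemma key (c d u v l M p q : ℕ) (huc : u ≤ c) (hvd : v ≤ d) (hl : 1 ≤ l)
    (h1 : ∃ a b e, a + b + e = l + M ∧ c*a + u*b ≤ p ∧ v*b + d*e ≤ q + d*M)
    (h2 : ∃ a b e, a + b + e = l + M ∧ c*a + u*b ≤ p + c*M ∧ v*b + d*e ≤ q) :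
    ∃ a b e, a + b + e = l ∧ c*a + u*b ≤ p ∧ v*b + d*e ≤ q := by
  obtain ⟨a, b, e, hs, hx, hy⟩ := h1
  obtain ⟨a', b', e', hs', hx', hy'⟩ := h2
  by_cases hab : a + b ≤ l
  · refine ⟨a, b, l - (a + b), by omega, hx, ?_⟩
    have he : e = (l - (a + b)) + M := by omega
    rw [he, mul_add] at hy
    omega
  · by_cases hbe : b' + e' ≤ l
    · refine ⟨l - (b' + e'), b', e', by omega, ?_, hy'⟩
      have ha : a' = (l - (b' + e')) + M := by omega
      rw [ha, mul_add] at hx'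
      omega
    · -- a + b ≥ l + 1 and b' + e' ≥ l + 1, so p ≥ u*l and q ≥ v*l
      refine ⟨0, l, 0, by omega, ?_, ?_⟩
      · have h1 : u * l ≤ u * (a + b) := Nat.mul_le_mul_left u (by omega)
        have h2 : u * (a + b) ≤ c * a + u * b := by
          rw [mul_add]
          exact Nat.add_le_add_right (Nat.mul_le_mul_right a huc) _
        omega
      · have h1 : v * l ≤ v * (b' + e') := Nat.mul_le_mul_left v (by omega)
        have h2 : v * (b' + e') ≤ v * b' + d * e' := by
          rw [mul_add]
          exact Nat.add_le_add_left (Nat.mul_le_mul_right e' hvd) _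
        omega

variable {K : Type*} [Field K]

lemma mem_pow_of_exp (c d u v : ℕ) {n : ℕ} {s : Fin 2 →₀ ℕ} (hs : s ∈ expSet c d u v n) :
    (monomial s (1 : K)) ∈ (Ideal.span {(X 0 : MvPolynomial (Fin 2) K) ^ c,
      X 0 ^ u * X 1 ^ v, (X 1 : MvPolynomial (Fin 2) K) ^ d}) ^ n := by
  obtain ⟨a, b, e, hsum, rfl⟩ := hs
  set I := Ideal.span {(X 0 : MvPolynomial (Fin 2) K) ^ c,
      X 0 ^ u * X 1 ^ v, (X 1 : MvPolynomial (Fin 2) K) ^ d}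
  have h1 : (X 0 : MvPolynomial (Fin 2) K) ^ c ∈ I := Ideal.subset_span (by simp)
  have h2 : (X 0 : MvPolynomial (Fin 2) K) ^ u * X 1 ^ v ∈ I := Ideal.subset_span (by simp)
  have h3 : (X 1 : MvPolynomial (Fin 2) K) ^ d ∈ I := Ideal.subset_span (by simp)
  have heq : (monomial (Finsupp.single 0 (c * a + u * b) + Finsupp.single 1 (v * b + d * e))
      (1 : K)) = ((X 0 : MvPolynomial (Fin 2) K) ^ c) ^ a * ((X 0 : MvPolynomial (Fin 2) K) ^ u * X 1 ^ v) ^ b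
        * ((X 1 : MvPolynomial (Fin 2) K) ^ d) ^ e := by
    simp only [X_pow_eq_monomial, monomial_pow, one_pow, monomial_mul, one_mul, mul_one]
    congr 1
    congr 1
    ext i
    fin_cases i <;> simp [Finsupp.single_apply] <;> ring
  rw [heq, ← hsum, pow_add, pow_add]
  exact Ideal.mul_mem_mul (Ideal.mul_mem_mul (Ideal.pow_mem_pow h1 a)
    (Ideal.pow_mem_pow h2 b)) (Ideal.pow_mem_pow h3 e)

lemma pow_eq_span (c d u v : ℕ) (n : ℕ) :
    (Ideal.span {(X 0 : MvPolynomial (Fin 2) K) ^ c,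
      X 0 ^ u * X 1 ^ v, (X 1 : MvPolynomial (Fin 2) K) ^ d}) ^ n
      = Ideal.span ((fun s => monomial s (1 : K)) '' expSet c d u v n) := by
  apply le_antisymm
  · induction n with
    | zero =>
      rw [pow_zero, Ideal.one_eq_top]
      have h0 : (0 : Fin 2 →₀ ℕ) ∈ expSet c d u v 0 := ⟨0, 0, 0, by simp, by simp⟩
      have h1 : (monomial (0 : Fin 2 →₀ ℕ) (1 : K)) ∈
          Ideal.span ((fun s => monomial s (1 : K)) '' expSet c d u v 0) :=
        Ideal.subset_span ⟨0, h0, rfl⟩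
      rw [monomial_zero', C_1] at h1
      exact top_le_iff.mpr ((Ideal.eq_top_iff_one _).mpr h1)
    | succ n ih =>
      rw [pow_succ]
      calc _ ≤ Ideal.span ((fun s => monomial s (1 : K)) '' expSet c d u v n) *
            Ideal.span {(X 0 : MvPolynomial (Fin 2) K) ^ c,
              X 0 ^ u * X 1 ^ v, (X 1 : MvPolynomial (Fin 2) K) ^ d} :=
            Ideal.mul_mono_left ih
        _ ≤ _ := by
            rw [Ideal.span_mul_span']
            rw [Ideal.span_le]
            rintro x ⟨p, ⟨s, hs, rfl⟩, g, hg, rfl⟩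
            obtain ⟨a, b, e, hsum, rfl⟩ := hs
            simp only [Set.mem_insert_iff, Set.mem_singleton_iff] at hg
            apply Ideal.subset_span
            rcases hg with rfl | rfl | rfl
            · refine ⟨_, ⟨a + 1, b, e, by omega, rfl⟩, ?_⟩
              simp only [X_pow_eq_monomial, monomial_mul, mul_one]
              congr 1
              congr 1
              ext i
              fin_cases i <;> simp [Finsupp.single_apply] <;> ring
            · refine ⟨_, ⟨a, b + 1, e, by omega, rfl⟩, ?_⟩
              simp only [X_pow_eq_monomial, monomial_mul, mul_one, one_mul]
              congr 1
              congr 1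
              ext i
              fin_cases i <;> simp [Finsupp.single_apply] <;> ring
            · refine ⟨_, ⟨a, b, e + 1, by omega, rfl⟩, ?_⟩
              simp only [X_pow_eq_monomial, monomial_mul, mul_one]
              congr 1
              congr 1
              ext i
              fin_cases i <;> simp [Finsupp.single_apply] <;> ring
  · rw [Ideal.span_le]
    rintro x ⟨s, hs, rfl⟩
    exact mem_pow_of_exp c d u v hs


end RRAux

/-- The Ratliff-Rush closure of an ideal, as a set: `∪_{m≥1} (I^{m+1} : I^m)`. -/
def ratliffRushClosure {R : Type*} [CommRing R] (I : Ideal R) : Set R :=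
  {x | ∃ m : ℕ, 1 ≤ m ∧ x ∈ (I ^ (m + 1)).colon ((I ^ m : Ideal R) : Set R)}

/-- An ideal is Ratliff-Rush if it equals its Ratliff-Rush closure. -/
def IsRatliffRush {R : Type*} [CommRing R] (I : Ideal R) : Prop :=
  (I : Set R) = ratliffRushClosure I

theorem powers_of_three_generated_ratliffRush (K : Type*) [Field K]
    (c d u v : ℕ) (hu : 0 < u) (huc : u < c) (hv : 0 < v) (hvd : v < d)
    (hint : (u : ℚ) / c + (v : ℚ) / d ≥ 1) :
    ∀ l : ℕ, 1 ≤ l →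
      IsRatliffRush ((Ideal.span {(MvPolynomial.X 0 : MvPolynomial (Fin 2) K) ^ c,
        MvPolynomial.X 0 ^ u * MvPolynomial.X 1 ^ v,
        (MvPolynomial.X 1 : MvPolynomial (Fin 2) K) ^ d}) ^ l) := by
  intro l hl
  set I : Ideal (MvPolynomial (Fin 2) K) :=
    Ideal.span {(MvPolynomial.X 0 : MvPolynomial (Fin 2) K) ^ c,
      MvPolynomial.X 0 ^ u * MvPolynomial.X 1 ^ v,
      (MvPolynomial.X 1 : MvPolynomial (Fin 2) K) ^ d} with hI
  apply Set.Subset.antisymm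
  · -- easy inclusion: J ⊆ RR-closure
    intro x hx
    refine ⟨1, le_refl 1, ?_⟩
    rw [Submodule.mem_colon]
    intro p hp
    rw [pow_one] at hp
    rw [smul_eq_mul]
    have h2 : (I ^ l) ^ (1 + 1) = (I ^ l) * (I ^ l) := by ring
    rw [h2]
    exact Ideal.mul_mem_mul hx hp
  · -- hard inclusion
    rintro x ⟨m, _hm, hcol⟩
    rw [Submodule.mem_colon] at hcol
    set M : ℕ := l * m with hM
    set L : ℕ := l * (m + 1) with hL
    -- first witness: (Y^d)^M
    have hw1 : (MvPolynomial.monomial (Finsupp.single 0 (c*0+u*0) + Finsupp.single 1 (v*0+d*M))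
        (1:K)) ∈ (I ^ l) ^ m := by
      rw [← pow_mul, ← hM]
      exact RRAux.mem_pow_of_exp c d u v ⟨0, 0, M, by omega, rfl⟩
    have hw2 : (MvPolynomial.monomial (Finsupp.single 0 (c*M+u*0) + Finsupp.single 1 (v*0+d*0))
        (1:K)) ∈ (I ^ l) ^ m := by
      rw [← pow_mul, ← hM]
      exact RRAux.mem_pow_of_exp c d u v ⟨M, 0, 0, by omega, rfl⟩
    have hx1 := hcol _ hw1
    have hx2 := hcol _ hw2
    rw [smul_eq_mul, ← pow_mul, ← hL] at hx1 hx2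
    simp only [Nat.mul_zero, add_zero, zero_add, Finsupp.single_zero] at hx1 hx2
    rw [RRAux.pow_eq_span, MvPolynomial.mem_ideal_span_monomial_image] at hx1 hx2
    show x ∈ I ^ l
    rw [RRAux.pow_eq_span, MvPolynomial.mem_ideal_span_monomial_image]
    intro s hs
    -- shifted monomials are in the supports
    have hsup1 : s + Finsupp.single 1 (d * M) ∈
        (x * MvPolynomial.monomial (Finsupp.single 1 (d * M)) (1:K)).support := by
      rw [MvPolynomial.mem_support_iff, MvPolynomial.coeff_mul_monomial, mul_one]
      exact MvPolynomial.mem_support_iff.mp hs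
    have hsup2 : s + Finsupp.single 0 (c * M) ∈
        (x * MvPolynomial.monomial (Finsupp.single 0 (c * M)) (1:K)).support := by
      rw [MvPolynomial.mem_support_iff, MvPolynomial.coeff_mul_monomial, mul_one]
      exact MvPolynomial.mem_support_iff.mp hs
    obtain ⟨s1, hs1, hle1⟩ := hx1 _ hsup1
    obtain ⟨s2, hs2, hle2⟩ := hx2 _ hsup2
    obtain ⟨a, b, e, hsum, rfl⟩ := hs1
    obtain ⟨a', b', e', hsum', rfl⟩ := hs2
    rw [RRAux.single_le_iff] at hle1 hle2
    simp only [Finsupp.add_apply, Finsupp.single_apply] at hle1 hle2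
    norm_num at hle1 hle2
    have hLM : L = l + M := by rw [hL, hM]; ring
    have hk := RRAux.key c d u v l M (s 0) (s 1) (le_of_lt huc) (le_of_lt hvd) hl
      ⟨a, b, e, by omega, hle1.1, hle1.2⟩ ⟨a', b', e', by omega, hle2.1, hle2.2⟩
    obtain ⟨α, β, γ, hsum3, hx3, hy3⟩ := hk
    refine ⟨_, ⟨α, β, γ, hsum3, rfl⟩, ?_⟩
    rw [RRAux.single_le_iff]
    exact ⟨hx3, hy3⟩
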